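/- Let A be a flat connection on a compact 4-manifold M with boundary, and let a, b be ad-valued 1-forms with d_A a = d_A b = 0. Then for any matrix-valued function ξ (not necessarily vanishing on ∂M), ∫_{∂M} Tr[(a∧b − b∧a)∧d_Aξ] = 0; i.e., the Lie derivative of the boundary 2-form ω'_A(a,b) = −(1/24π³)∫_{∂M}Tr[(a∧b−b∧a)∧A] along the gauge direction d_Aξ vanishes on flat connections. -/
import Mathlib


/-- Let `A` be a flat connection (`F_A = dA + A∧A = 0`) on a compact
oriented 4-manifold `M` with boundary, and let `a, b` be ad-valued 1-forms with
`d_A a = d_A b = 0` (where `d_A x = dx + A∧x + x∧A`).  Then for any matrix-valued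
function `ξ` (not necessarily vanishing on `∂M`),
`∫_{∂M} Tr[(a∧b − b∧a)∧d_Aξ] = 0`; i.e. the Lie derivative of the boundary 2-form
`ω'_A(a,b) = −(1/24π³)∫_{∂M}Tr[(a∧b−b∧a)∧A]` along the gauge direction `d_Aξ` vanishes
on flat connections.  Forms are modeled abstractly; `intB` integrates the restriction of
an `M`-form over the closed boundary `∂M` (so `∫_{∂M} d₀ = 0`). -/
theorem boundary_form_gauge_invariant_on_flat {Ω Ω₀ : Type*} [Ring Ω] [AddCommGroup Ω₀]
    (P : ℕ → Ω → Prop)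
    (d : Ω →+ Ω) (d₀ : Ω₀ →+ Ω₀) (Tr : Ω →+ Ω₀) (intM intB : Ω₀ →+ ℝ)
    (hPmul : ∀ i j x y, P i x → P j y → P (i + j) (x * y))
    (hPadd : ∀ i x y, P i x → P i y → P i (x + y))
    (hPd : ∀ i x, P i x → P (i + 1) (d x))
    (hleib : ∀ i j x y, P i x → P j y →
      d (x * y) = d x * y + ((-1 : ℤ) ^ i) • (x * d y))
    (hdd : ∀ x, d (d x) = 0)
    (hTrd : ∀ x, d₀ (Tr x) = Tr (d x))
    (hcyc : ∀ i j x y, P i x → P j y →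
      Tr (x * y) = ((-1 : ℤ) ^ (i * j)) • Tr (y * x))
    (hStokes : ∀ x, intM (d₀ x) = intB x)
    (hBclosed : ∀ x, intB (d₀ x) = 0)
    (A a b ξ : Ω) (hA : P 1 A) (ha : P 1 a) (hb : P 1 b) (hξ : P 0 ξ)
    (hflat : d A + A * A = 0)
    (hda : d a + (A * a + a * A) = 0)
    (hdb : d b + (A * b + b * A) = 0) :
    intB (Tr ((a * b - b * a) * (d ξ + (A * ξ - ξ * A)))) = 0 := by
  have h1 : d a = -(A * a + a * A) := eq_neg_of_add_eq_zero_left hda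
  have h2 : d b = -(A * b + b * A) := eq_neg_of_add_eq_zero_left hdb
  have hab : P 2 (a * b) := by simpa using hPmul 1 1 a b ha hb
  have hba : P 2 (b * a) := by simpa using hPmul 1 1 b a hb ha
  have habξ : P 2 (a * b * ξ) := by simpa using hPmul 2 0 _ _ hab hξ
  have hbaξ : P 2 (b * a * ξ) := by simpa using hPmul 2 0 _ _ hba hξ
  have hdab : d (a * b) = a * b * A - A * (a * b) := by
    have h := hleib 1 1 a b ha hb
    rw [h1, h2] at h
    simp only [pow_one, neg_smul, one_smul] at h
    rw [h]; noncomm_ring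
  have hdba : d (b * a) = b * a * A - A * (b * a) := by
    have h := hleib 1 1 b a hb ha
    rw [h1, h2] at h
    simp only [pow_one, neg_smul, one_smul] at h
    rw [h]; noncomm_ring
  have e : (a * b - b * a) * (d ξ + (A * ξ - ξ * A)) =
      d ((a * b - b * a) * ξ) + (A * (a * b * ξ) - a * b * ξ * A)
        - (A * (b * a * ξ) - b * a * ξ * A) := by
    have hA1 := hleib 2 0 (a * b) ξ hab hξ
    have hA2 := hleib 2 0 (b * a) ξ hba hξ
    norm_num at hA1 hA2
    rw [show (a * b - b * a) * ξ = a * b * ξ - b * a * ξ from by noncomm_ring,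
      map_sub, hA1, hA2, hdab, hdba]
    noncomm_ring
  have hc1 : Tr (A * (a * b * ξ)) = Tr (a * b * ξ * A) := by
    have h := hcyc 1 2 A (a * b * ξ) hA habξ
    norm_num at h
    exact h
  have hc2 : Tr (A * (b * a * ξ)) = Tr (b * a * ξ * A) := by
    have h := hcyc 1 2 A (b * a * ξ) hA hbaξ
    norm_num at h
    exact h
  have key : Tr ((a * b - b * a) * (d ξ + (A * ξ - ξ * A)))
      = d₀ (Tr ((a * b - b * a) * ξ)) := by
    rw [hTrd, e]
    simp only [map_add, map_sub, hc1, hc2]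
    abel
  rw [key, hBclosed]
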